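/- arXiv:1012.2372 — 4 statements merged into one kernel-verified Lean document; each statement's English description precedes it below -/
import Mathlib

section
/- For every positive integer k and all real numbers β₁, ..., β_k, we have cos(β₁ + ⋯ + β_k) ≥ k·(cos β₁ + ⋯ + cos β_k) − k² + 1. -/
/-!
Write `1 - cos x = 2 sin² (x / 2)`. Since `|sin|` is subadditive, `|sin (∑ βᵢ / 2)| ≤ ∑ |sin (βᵢ / 2)|`,
and Cauchy–Schwarz bounds the square of the right side by `k ∑ sin² (βᵢ / 2)`. Hence
`1 - cos (∑ βᵢ) ≤ k ∑ (1 - cos βᵢ)`, which rearranges to the claim.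
-/

open Finset Real

lemma Real.one_sub_cos_eq_two_mul_sin_half_sq (x : ℝ) : 1 - cos x = 2 * sin (x / 2) ^ 2 := by
  conv_lhs => rw [← mul_div_cancel₀ x two_ne_zero, cos_two_mul, cos_sq']
  ring

lemma Real.abs_sin_add_le (x y : ℝ) : |sin (x + y)| ≤ |sin x| + |sin y| :=
  calc |sin (x + y)| = |sin x * cos y + cos x * sin y| := by rw [sin_add]
    _ ≤ |sin x| * |cos y| + |cos x| * |sin y| := by
      simpa only [abs_mul] using abs_add_le (sin x * cos y) (cos x * sin y)
    _ ≤ |sin x| * 1 + 1 * |sin y| := by gcongr <;> exact abs_cos_le_one _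
    _ = |sin x| + |sin y| := by ring

lemma Real.abs_sin_sum_le {ι : Type*} (s : Finset ι) (f : ι → ℝ) :
    |sin (∑ i ∈ s, f i)| ≤ ∑ i ∈ s, |sin (f i)| :=
  le_sum_of_subadditive (fun x ↦ |sin x|) (by simp) abs_sin_add_le s f

lemma Real.one_sub_cos_sum_le {ι : Type*} (s : Finset ι) (f : ι → ℝ) :
    1 - cos (∑ i ∈ s, f i) ≤ #s * ∑ i ∈ s, (1 - cos (f i)) := by
  have h_abs : |sin ((∑ i ∈ s, f i) / 2)| ≤ ∑ i ∈ s, |sin (f i / 2)| := by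
    simpa only [sum_div] using abs_sin_sum_le s (fun i ↦ f i / 2)
  have h_sq : sin ((∑ i ∈ s, f i) / 2) ^ 2 ≤ #s * ∑ i ∈ s, sin (f i / 2) ^ 2 :=
    calc sin ((∑ i ∈ s, f i) / 2) ^ 2 ≤ (∑ i ∈ s, |sin (f i / 2)|) ^ 2 :=
          sq_le_sq' (neg_le_of_abs_le h_abs) (le_of_abs_le h_abs)
      _ ≤ #s * ∑ i ∈ s, |sin (f i / 2)| ^ 2 := sq_sum_le_card_mul_sum_sq
      _ = #s * ∑ i ∈ s, sin (f i / 2) ^ 2 := by simp only [sq_abs]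
  simp only [one_sub_cos_eq_two_mul_sin_half_sq, ← mul_sum]
  linarith

theorem cos_sum_ge_general (k : ℕ) (β : Fin k → ℝ) :
    Real.cos (∑ i, β i) ≥ k * (∑ i, Real.cos (β i)) - k ^ 2 + 1 := by
  have h := one_sub_cos_sum_le univ β
  simp only [sum_sub_distrib, sum_const, card_univ, Fintype.card_fin, nsmul_eq_mul, mul_one] at h
  linarith

theorem cos_sum_ge (k : ℕ) (hk : 0 < k) (β : Fin k → ℝ) :
    Real.cos (∑ i, β i) ≥ k * (∑ i, Real.cos (β i)) - k ^ 2 + 1 :=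
  cos_sum_ge_general k β
end

section
/- Let Z be a random vector in F_q^n, V a subspace of F_q^n, and U ≤ V a subspace with P(Z ∉ U) > 0. Then P(Z ∈ V \ U) / P(Z ∉ U) ≤ P(Z ∈ V). -/
/-!
Write `a = P(Z ∈ U)` and `b = P(Z ∈ V \ U)`, so that `P(Z ∈ V) = a + b` and `P(Z ∉ U) = 1 - a`.
The claim `b ≤ (a + b) (1 - a)` rearranges to `a (a + b) ≤ a`, which holds because `a ≥ 0` and
`a + b = P(Z ∈ V) ≤ 1`.
-/

open Finset

theorem div_one_sub_le_add_of_add_le_one {a b : ℝ} (ha : 0 ≤ a) (hb : 0 ≤ b) (hab : a + b ≤ 1) :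
    b / (1 - a) ≤ a + b :=
  div_le_of_le_mul₀ (by linarith) (by linarith) (by nlinarith [mul_le_mul_of_nonneg_left hab ha])

section FiniteDistribution

variable {α : Type*} [Fintype α] {μ : α → ℝ} {p q : α → Prop} [DecidablePred p] [DecidablePred q]

theorem Finset.sum_filter_not_eq_one_sub (hμ1 : ∑ z, μ z = 1) :
    ∑ z ∈ univ.filter (fun z => ¬ p z), μ z = 1 - ∑ z ∈ univ.filter p, μ z := by
  rw [← hμ1, ← sum_filter_add_sum_filter_not univ p]
  ring

theorem Finset.sum_filter_eq_add_sum_filter_and_not (hpq : ∀ z, p z → q z) :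
    ∑ z ∈ univ.filter q, μ z =
      ∑ z ∈ univ.filter p, μ z + ∑ z ∈ univ.filter (fun z => q z ∧ ¬ p z), μ z := by
  rw [← sum_filter_add_sum_filter_not (univ.filter q) p, filter_filter, filter_filter]
  congr 2
  ext z
  simp only [mem_filter, mem_univ, true_and]
  exact ⟨And.right, fun hz => ⟨hpq z hz, hz⟩⟩

theorem sum_filter_and_not_div_sum_filter_not_le (hμ0 : ∀ z, 0 ≤ μ z) (hμ1 : ∑ z, μ z = 1)
    (hpq : ∀ z, p z → q z) :
    (∑ z ∈ univ.filter (fun z => q z ∧ ¬ p z), μ z) / (∑ z ∈ univ.filter (fun z => ¬ p z), μ z) ≤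
      ∑ z ∈ univ.filter q, μ z := by
  have hq_le_one : ∑ z ∈ univ.filter q, μ z ≤ 1 := hμ1 ▸ sum_le_univ_sum_of_nonneg hμ0
  rw [sum_filter_eq_add_sum_filter_and_not hpq] at hq_le_one ⊢
  rw [sum_filter_not_eq_one_sub (p := p) hμ1]
  exact div_one_sub_le_add_of_add_le_one (sum_nonneg fun z _ => hμ0 z)
    (sum_nonneg fun z _ => hμ0 z) hq_le_one

end FiniteDistribution

open scoped Classical in
theorem single_step_bound_general {F : Type} [Field F] [Fintype F] (n : ℕ)
    (μ : (Fin n → F) → ℝ) (hμ0 : ∀ z, 0 ≤ μ z) (hμ1 : ∑ z, μ z = 1)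
    (U V : Submodule F (Fin n → F)) (hUV : U ≤ V) :
    (∑ z ∈ univ.filter (fun z : Fin n → F => z ∈ V ∧ z ∉ U), μ z) /
      (∑ z ∈ univ.filter (fun z : Fin n → F => z ∉ U), μ z) ≤
    ∑ z ∈ univ.filter (fun z : Fin n → F => z ∈ V), μ z :=
  sum_filter_and_not_div_sum_filter_not_le hμ0 hμ1 fun _ hz => hUV hz

open scoped Classical in
theorem single_step_bound {F : Type} [Field F] [Fintype F] (n : ℕ)
    (μ : (Fin n → F) → ℝ) (hμ0 : ∀ z, 0 ≤ μ z) (hμ1 : ∑ z, μ z = 1)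
    (U V : Submodule F (Fin n → F)) (hUV : U ≤ V)
    (hpos : 0 < ∑ z ∈ univ.filter (fun z : Fin n → F => z ∉ U), μ z) :
    (∑ z ∈ univ.filter (fun z : Fin n → F => z ∈ V ∧ z ∉ U), μ z) /
      (∑ z ∈ univ.filter (fun z : Fin n → F => z ∉ U), μ z) ≤
    ∑ z ∈ univ.filter (fun z : Fin n → F => z ∈ V), μ z :=
  single_step_bound_general n μ hμ0 hμ1 U V hUV
end

section
/- Let μ be a probability measure on F_q, w ∈ F_q^n, and define ψ(t) = 1 − |μ̂(t)|² and f(t) = Σ_{ℓ=1}^n ψ(w_ℓ t) for t ∈ F_q. Then for all t₁, ..., t_k ∈ F_q, f(t₁ + ⋯ + t_k) ≤ k²·max(f(t₁),...,f(t_k)); in particular the level sets T(v) = {t : f(t) ≤ v} satisfy T(v) + ⋯ + T(v) (k summands) ⊆ T(k²v). -/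
/-!
Write `e(u) = ep p (Tr u)`, so that `μ̂(s) = ∑ₓ μ(x) e(sx)` with `|e| = 1`. For unit vectors the
variance identity gives `2 (1 - |μ̂(s)|²) = ∑ₓ ∑ᵧ μ(x) μ(y) |e(sx) - e(sy)|²`. Since `e` turns
sums into products, `|∏ⱼ aⱼ - ∏ⱼ bⱼ| ≤ ∑ⱼ |aⱼ - bⱼ|` on the unit circle and Cauchy–Schwarz give
`|e((∑ⱼ sⱼ)x) - e((∑ⱼ sⱼ)y)|² ≤ k ∑ⱼ |e(sⱼx) - e(sⱼy)|²`; averaging yields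
`ψ(s₁ + ⋯ + sₖ) ≤ k ∑ⱼ ψ(sⱼ)`, hence `f(t₁ + ⋯ + tₖ) ≤ k ∑ⱼ f(tⱼ) ≤ k² max f(tⱼ)`.
-/

open Finset

/-- The standard additive character of `ZMod p`. -/
noncomputable def ep (p : ℕ) (x : ZMod p) : ℂ :=
  Complex.exp (2 * Real.pi * Complex.I * (x.val : ℂ) / p)

/-- The Fourier transform of `μ : F → ℝ` at `s ∈ F`, via the field trace to `ZMod p`. -/
noncomputable def muHat (p : ℕ) {F : Type} [Field F] [Fintype F] [Algebra (ZMod p) F]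
    (μ : F → ℝ) (s : F) : ℂ :=
  ∑ t : F, (μ t : ℂ) * ep p (Algebra.trace (ZMod p) F (s * t))

lemma sum_sum_mul_mul_norm_sub_sq {E X : Type*} [NormedAddCommGroup E] [InnerProductSpace ℝ E]
    [Fintype X] (μ : X → ℝ) (hμ : ∑ x, μ x = 1) (z : X → E) :
    ∑ x, ∑ y, μ x * μ y * ‖z x - z y‖ ^ 2
      = 2 * (∑ x, μ x * ‖z x‖ ^ 2 - ‖∑ x, μ x • z x‖ ^ 2) := by
  have hsq : ‖∑ x, μ x • z x‖ ^ 2 = ∑ x, ∑ y, μ x * μ y * inner ℝ (z x) (z y) := by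
    rw [← real_inner_self_eq_norm_sq, sum_inner]
    simp only [inner_sum, real_inner_smul_left, real_inner_smul_right]
    exact sum_congr rfl fun _ _ ↦ sum_congr rfl fun _ _ ↦ by ring
  have hleft : ∑ x, ∑ y, μ x * μ y * ‖z x‖ ^ 2 = ∑ x, μ x * ‖z x‖ ^ 2 := by
    simp only [mul_right_comm _ (μ _), ← mul_sum, hμ, mul_one]
  have hright : ∑ x, ∑ y, μ x * μ y * ‖z y‖ ^ 2 = ∑ x, μ x * ‖z x‖ ^ 2 := by
    simp only [mul_assoc, ← mul_sum, ← sum_mul, hμ, one_mul]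
  simp only [norm_sub_sq_real, mul_add, mul_sub, sum_add_distrib, sum_sub_distrib, hleft, hright,
    hsq, mul_left_comm _ (2 : ℝ), ← mul_sum]
  ring

lemma norm_prod_sub_prod_le_sum_norm_sub {ι R : Type*} [NormedCommRing R] [NormOneClass R]
    (s : Finset ι) {z w : ι → R} (hz : ∀ i ∈ s, ‖z i‖ ≤ 1) (hw : ∀ i ∈ s, ‖w i‖ ≤ 1) :
    ‖∏ i ∈ s, z i - ∏ i ∈ s, w i‖ ≤ ∑ i ∈ s, ‖z i - w i‖ := by
  classical
  induction s using Finset.induction_on with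
  | empty => simp
  | insert a s ha ih =>
    simp only [forall_mem_insert] at hz hw
    have hW : ‖∏ i ∈ s, w i‖ ≤ 1 :=
      (Finset.norm_prod_le _ _).trans (prod_le_one (fun _ _ ↦ norm_nonneg _) hw.2)
    rw [prod_insert ha, prod_insert ha, sum_insert ha,
      show z a * ∏ i ∈ s, z i - w a * ∏ i ∈ s, w i
        = z a * (∏ i ∈ s, z i - ∏ i ∈ s, w i) + (z a - w a) * ∏ i ∈ s, w i by ring]
    calc _ ≤ ‖z a‖ * ‖∏ i ∈ s, z i - ∏ i ∈ s, w i‖ + ‖z a - w a‖ * ‖∏ i ∈ s, w i‖ :=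
          (norm_add_le _ _).trans (add_le_add (norm_mul_le _ _) (norm_mul_le _ _))
      _ ≤ 1 * ∑ i ∈ s, ‖z i - w i‖ + ‖z a - w a‖ * 1 := by
          gcongr
          · exact hz.1
          · exact ih hz.2 hw.2
      _ = _ := by ring

lemma AddChar.map_sum_eq_prod {ι A M : Type*} [AddCommMonoid A] [CommMonoid M]
    (ψ : AddChar A M) (s : Finset ι) (f : ι → A) : ψ (∑ i ∈ s, f i) = ∏ i ∈ s, ψ (f i) := by
  simpa [← ofAdd_sum] using map_prod ψ.toMonoidHom (fun i ↦ Multiplicative.ofAdd (f i)) s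

theorem one_sub_norm_sq_sum_mul_prod_le {X ι : Type*} [Fintype X] [Fintype ι] (μ : X → ℝ)
    (hμ0 : ∀ x, 0 ≤ μ x) (hμ1 : ∑ x, μ x = 1) (z : ι → X → ℂ) (hz : ∀ i x, ‖z i x‖ = 1) :
    1 - ‖∑ x, μ x * ∏ i, z i x‖ ^ 2
      ≤ Fintype.card ι * ∑ i, (1 - ‖∑ x, μ x * z i x‖ ^ 2) := by
  have hvar : ∀ u : X → ℂ, (∀ x, ‖u x‖ = 1) →
      2 * (1 - ‖∑ x, μ x * u x‖ ^ 2) = ∑ x, ∑ y, μ x * μ y * ‖u x - u y‖ ^ 2 := by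
    intro u hu
    simp [sum_sum_mul_mul_norm_sub_sq μ hμ1, hu, hμ1, Complex.real_smul]
  have hpt : ∀ x y, ‖∏ i, z i x - ∏ i, z i y‖ ^ 2 ≤ Fintype.card ι * ∑ i, ‖z i x - z i y‖ ^ 2 :=
    fun x y ↦ (pow_le_pow_left₀ (norm_nonneg _) (norm_prod_sub_prod_le_sum_norm_sub _
      (fun _ _ ↦ (hz _ x).le) (fun _ _ ↦ (hz _ y).le)) 2).trans (sq_sum_le_card_mul_sum_sq ..)
  suffices 2 * (1 - ‖∑ x, μ x * ∏ i, z i x‖ ^ 2)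
      ≤ 2 * (Fintype.card ι * ∑ i, (1 - ‖∑ x, μ x * z i x‖ ^ 2)) by linarith
  calc _ = ∑ x, ∑ y, μ x * μ y * ‖∏ i, z i x - ∏ i, z i y‖ ^ 2 :=
        hvar _ fun x ↦ by simp [norm_prod, hz]
    _ ≤ ∑ x, ∑ y, μ x * μ y * (Fintype.card ι * ∑ i, ‖z i x - z i y‖ ^ 2) := by
        gcongr with x _ y _
        · exact mul_nonneg (hμ0 x) (hμ0 y)
        · exact hpt x y
    _ = Fintype.card ι * ∑ i, ∑ x, ∑ y, μ x * μ y * ‖z i x - z i y‖ ^ 2 := by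
        simp only [mul_sum, mul_left_comm _ (Fintype.card ι : ℝ)]
        exact (sum_congr rfl fun _ _ ↦ sum_comm).trans sum_comm
    _ = _ := by simp only [← hvar _ (hz _), ← mul_sum]; ring

lemma ep_eq_stdAddChar (p : ℕ) [NeZero p] (x : ZMod p) : ep p x = ZMod.stdAddChar x := by
  rw [ZMod.stdAddChar_apply, ZMod.toCircle_apply, ep]

lemma one_sub_norm_muHat_sq_sum_le (p : ℕ) [Fact p.Prime] {F : Type} [Field F] [Fintype F]
    [Algebra (ZMod p) F] (μ : F → ℝ) (hμ0 : ∀ t, 0 ≤ μ t) (hμ1 : ∑ t, μ t = 1)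
    {ι : Type*} [Fintype ι] (s : ι → F) :
    1 - ‖muHat p μ (∑ i, s i)‖ ^ 2 ≤ Fintype.card ι * ∑ i, (1 - ‖muHat p μ (s i)‖ ^ 2) := by
  simp only [muHat, ep_eq_stdAddChar, sum_mul, map_sum, AddChar.map_sum_eq_prod]
  exact one_sub_norm_sq_sum_mul_prod_le μ hμ0 hμ1 _ fun _ _ ↦ AddChar.norm_apply _ _

theorem level_set_sumset_general (p : ℕ) [Fact p.Prime] {F : Type} [Field F] [Fintype F]
    [Algebra (ZMod p) F] (μ : F → ℝ) (hμ0 : ∀ t, 0 ≤ μ t) (hμ1 : ∑ t, μ t = 1)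
    (n : ℕ) (w : Fin n → F)
    (f : F → ℝ) (hf : ∀ t, f t = ∑ i, (1 - ‖muHat p μ (w i * t)‖ ^ 2))
    (k : ℕ) :
    (∀ t : Fin k → F, ∀ v : ℝ, (∀ j, f (t j) ≤ v) → f (∑ j, t j) ≤ k ^ 2 * v) ∧
    (∀ v : ℝ, ∀ s ∈ {x : F | ∃ t : Fin k → F, (∀ j, f (t j) ≤ v) ∧ x = ∑ j, t j},
      f s ≤ k ^ 2 * v) := by
  have hsum (t : Fin k → F) : f (∑ j, t j) ≤ k * ∑ j, f (t j) := by
    simp only [hf]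
    rw [sum_comm, mul_sum]
    refine sum_le_sum fun i _ ↦ ?_
    simpa [mul_sum] using one_sub_norm_muHat_sq_sum_le p μ hμ0 hμ1 (fun j ↦ w i * t j)
  have hlevel (t : Fin k → F) (v : ℝ) (hv : ∀ j, f (t j) ≤ v) : f (∑ j, t j) ≤ k ^ 2 * v :=
    calc f (∑ j, t j) ≤ k * ∑ j, f (t j) := hsum t
      _ ≤ k * ∑ _j : Fin k, v := by gcongr with j; exact hv j
      _ = k ^ 2 * v := by simp only [sum_const, card_univ, Fintype.card_fin, nsmul_eq_mul]; ring
  exact ⟨hlevel, fun v s ⟨t, ht, hs⟩ ↦ hs ▸ hlevel t v ht⟩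

theorem level_set_sumset (p : ℕ) [Fact p.Prime] {F : Type} [Field F] [Fintype F]
    [Algebra (ZMod p) F] (μ : F → ℝ) (hμ0 : ∀ t, 0 ≤ μ t) (hμ1 : ∑ t, μ t = 1)
    (n : ℕ) (w : Fin n → F)
    (f : F → ℝ) (hf : ∀ t, f t = ∑ i, (1 - ‖muHat p μ (w i * t)‖ ^ 2))
    (k : ℕ) (hk : 0 < k) :
    (∀ t : Fin k → F, ∀ v : ℝ, (∀ j, f (t j) ≤ v) → f (∑ j, t j) ≤ k ^ 2 * v) ∧
    (∀ v : ℝ, ∀ s ∈ {x : F | ∃ t : Fin k → F, (∀ j, f (t j) ≤ v) ∧ x = ∑ j, t j},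
      f s ≤ k ^ 2 * v) :=
  level_set_sumset_general p μ hμ0 hμ1 n w f hf k
end

section
/- Let μ be a probability measure on F_q and define ν with ν̂(ξ) = 1 − γ + γ·|μ̂(ξ)|² where γ = 1/8. Then for all additive characters θ, ψ of F_q: |μ̂(θ)·μ̂(ψ)| ≤ ν̂(θ·ψ)², where θ·ψ denotes the character corresponding to the sum of the dual elements. -/
open Finset

/-! Writing `a = ‖μ̂ θ‖`, `b = ‖μ̂ ψ‖`, `c = ‖μ̂ (θ + ψ)‖`, the spectrum sumset bound reads
`2a + 2b - 3 ≤ c`. After rotating `μ̂ θ` and `μ̂ ψ` onto the positive reals, it is the average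
against `μ` of the pointwise inequality `1 - Re (w z) ≤ 2 (1 - Re w) + 2 (1 - Re z)` for unit
complex numbers, which is the triangle inequality `‖1 - w z‖ ≤ ‖1 - w‖ + ‖1 - z‖` squared, since
`‖1 - w‖² = 2 (1 - Re w)`. Finally `ab ≤ ((a + b) / 2)²`, and either `a + b ≤ 3/2`, so that
`ab ≤ 9/16 < (7/8)²`, or `c ≥ 2a + 2b - 3 ≥ 0` and `(a + b) / 2 ≤ 7/8 + (2a + 2b - 3)² / 8`, which
clears to `((a + b) / 2 - 1)² ≥ 0`. -/

lemma norm_ep (p : ℕ) (x : ZMod p) : ‖ep p x‖ = 1 := by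
  rw [ep, show 2 * Real.pi * Complex.I * (x.val : ℂ) / p
      = ((2 * Real.pi * x.val / p : ℝ) : ℂ) * Complex.I by push_cast; ring]
  exact Complex.norm_exp_ofReal_mul_I _

lemma ep_add (p : ℕ) (x y : ZMod p) : ep p (x + y) = ep p x * ep p y := by
  rcases eq_or_ne p 0 with rfl | hp
  · -- division by `(0 : ℂ)` makes `ep 0` constantly `1`
    simp [ep]
  · have : NeZero p := ⟨hp⟩
    simp only [ep, ← ZMod.toCircle_apply, AddChar.map_add_eq_mul, Circle.coe_mul]

namespace Complex

lemma norm_one_sub_sq_of_norm_eq_one {w : ℂ} (hw : ‖w‖ = 1) : ‖1 - w‖ ^ 2 = 2 * (1 - w.re) := by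
  rw [Complex.sq_norm, normSq_sub, normSq_eq_norm_sq w, hw]
  simp only [map_one, one_pow, one_mul, conj_re]
  ring

lemma one_sub_re_mul_le {w z : ℂ} (hw : ‖w‖ = 1) (hz : ‖z‖ = 1) :
    1 - (w * z).re ≤ 2 * (1 - w.re) + 2 * (1 - z.re) := by
  have htri : ‖1 - w * z‖ ≤ ‖1 - w‖ + ‖1 - z‖ := calc
    ‖1 - w * z‖ = ‖(1 - w) + w * (1 - z)‖ := by ring_nf
    _ ≤ ‖1 - w‖ + ‖w * (1 - z)‖ := norm_add_le _ _
    _ = ‖1 - w‖ + ‖1 - z‖ := by rw [norm_mul, hw, one_mul]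
  have hwz : ‖w * z‖ = 1 := by rw [norm_mul, hw, hz, one_mul]
  have hsq : ‖1 - w * z‖ ^ 2 ≤ 2 * ‖1 - w‖ ^ 2 + 2 * ‖1 - z‖ ^ 2 := by
    nlinarith [pow_le_pow_left₀ (norm_nonneg _) htri 2, sq_nonneg (‖1 - w‖ - ‖1 - z‖)]
  rw [norm_one_sub_sq_of_norm_eq_one hwz, norm_one_sub_sq_of_norm_eq_one hw,
    norm_one_sub_sq_of_norm_eq_one hz] at hsq
  linarith

lemma exists_norm_eq_one_mul_eq_norm (z : ℂ) : ∃ u : ℂ, ‖u‖ = 1 ∧ u * z = ‖z‖ := by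
  refine ⟨exp (-arg z * I), by simpa using norm_exp_ofReal_mul_I (-arg z), ?_⟩
  nth_rw 2 [← norm_mul_exp_arg_mul_I z]
  rw [mul_left_comm, ← exp_add, neg_mul, neg_add_cancel, exp_zero, mul_one]

end Complex

section WeightedSum

variable {ι : Type*} [Fintype ι]

lemma re_weighted_sum (w : ι → ℝ) (f : ι → ℂ) :
    (∑ t, (w t : ℂ) * f t).re = ∑ t, w t * (f t).re := by
  simp only [Complex.re_sum, Complex.re_ofReal_mul]

variable {w : ι → ℝ}

lemma two_mul_re_add_two_mul_re_sub_three_le (hw0 : ∀ t, 0 ≤ w t) (hw1 : ∑ t, w t = 1)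
    {f g : ι → ℂ} (hf : ∀ t, ‖f t‖ = 1) (hg : ∀ t, ‖g t‖ = 1) :
    2 * (∑ t, (w t : ℂ) * f t).re + 2 * (∑ t, (w t : ℂ) * g t).re - 3 ≤
      (∑ t, (w t : ℂ) * (f t * g t)).re := by
  have hpoint (t : ι) : w t * (2 * (f t).re + 2 * (g t).re - 3) ≤ w t * (f t * g t).re :=
    mul_le_mul_of_nonneg_left (by linarith [Complex.one_sub_re_mul_le (hf t) (hg t)]) (hw0 t)
  calc 2 * (∑ t, (w t : ℂ) * f t).re + 2 * (∑ t, (w t : ℂ) * g t).re - 3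
      = ∑ t, w t * (2 * (f t).re + 2 * (g t).re - 3) := by
        simp only [re_weighted_sum, mul_add, mul_sub, sum_add_distrib, sum_sub_distrib,
          ← sum_mul, hw1, mul_sum]
        ring_nf
    _ ≤ ∑ t, w t * (f t * g t).re := sum_le_sum fun t _ => hpoint t
    _ = _ := (re_weighted_sum w _).symm

lemma two_mul_norm_add_two_mul_norm_sub_three_le (hw0 : ∀ t, 0 ≤ w t) (hw1 : ∑ t, w t = 1)
    {f g : ι → ℂ} (hf : ∀ t, ‖f t‖ = 1) (hg : ∀ t, ‖g t‖ = 1) :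
    2 * ‖∑ t, (w t : ℂ) * f t‖ + 2 * ‖∑ t, (w t : ℂ) * g t‖ - 3 ≤
      ‖∑ t, (w t : ℂ) * (f t * g t)‖ := by
  obtain ⟨u, hu, hfu⟩ := Complex.exists_norm_eq_one_mul_eq_norm (∑ t, (w t : ℂ) * f t)
  obtain ⟨v, hv, hgv⟩ := Complex.exists_norm_eq_one_mul_eq_norm (∑ t, (w t : ℂ) * g t)
  have hrot (c : ℂ) (h : ι → ℂ) : ∑ t, (w t : ℂ) * (c * h t) = c * ∑ t, (w t : ℂ) * h t := by
    rw [mul_sum]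
    exact sum_congr rfl fun t _ => mul_left_comm _ _ _
  have hre := two_mul_re_add_two_mul_re_sub_three_le hw0 hw1 (f := fun t => u * f t)
    (g := fun t => v * g t) (fun t => by simp [hu, hf]) (fun t => by simp [hv, hg])
  simp only [mul_mul_mul_comm u, hrot, hfu, hgv, Complex.ofReal_re] at hre
  calc _ ≤ (u * v * ∑ t, (w t : ℂ) * (f t * g t)).re := hre
    _ ≤ ‖u * v * ∑ t, (w t : ℂ) * (f t * g t)‖ := Complex.re_le_norm _
    _ = ‖∑ t, (w t : ℂ) * (f t * g t)‖ := by rw [norm_mul, norm_mul, hu, hv, one_mul, one_mul]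

end WeightedSum

lemma mul_le_sq_of_two_mul_add_two_mul_sub_three_le {a b c : ℝ} (ha : 0 ≤ a) (hb : 0 ≤ b)
    (habc : 2 * a + 2 * b - 3 ≤ c) :
    a * b ≤ (1 - 1 / 8 + 1 / 8 * c ^ 2) ^ 2 := by
  have hamgm : a * b ≤ ((a + b) / 2) ^ 2 := by nlinarith [sq_nonneg (a - b)]
  rcases le_or_gt (a + b) (3 / 2) with hsmall | hlarge
  · calc a * b ≤ ((a + b) / 2) ^ 2 := hamgm
      _ ≤ (1 - 1 / 8) ^ 2 := by gcongr; linarith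
      _ ≤ (1 - 1 / 8 + 1 / 8 * c ^ 2) ^ 2 := by
        gcongr
        exact le_add_of_nonneg_right (by positivity)
  · calc a * b ≤ ((a + b) / 2) ^ 2 := hamgm
      _ ≤ (1 - 1 / 8 + 1 / 8 * (2 * a + 2 * b - 3) ^ 2) ^ 2 := by
        gcongr
        nlinarith [sq_nonneg (a + b - 2)]
      _ ≤ (1 - 1 / 8 + 1 / 8 * c ^ 2) ^ 2 := by gcongr; linarith

theorem swap_key_inequality_general (p : ℕ) {F : Type} [Field F] [Fintype F]
    [Algebra (ZMod p) F] (μ : F → ℝ) (hμ0 : ∀ t, 0 ≤ μ t) (hμ1 : ∑ t, μ t = 1)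
    (θ ψ : F) :
    ‖muHat p μ θ * muHat p μ ψ‖ ≤
      (1 - (1 / 8 : ℝ) + (1 / 8 : ℝ) * ‖muHat p μ (θ + ψ)‖ ^ 2) ^ 2 := by
  have hchar (s t : F) : ‖ep p (Algebra.trace (ZMod p) F (s * t))‖ = 1 := norm_ep p _
  have hsum : muHat p μ (θ + ψ) = ∑ t, (μ t : ℂ) *
      (ep p (Algebra.trace (ZMod p) F (θ * t)) * ep p (Algebra.trace (ZMod p) F (ψ * t))) := by
    simp only [muHat, add_mul, map_add, ep_add]
  rw [norm_mul]
  refine mul_le_sq_of_two_mul_add_two_mul_sub_three_le (norm_nonneg _) (norm_nonneg _) ?_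
  rw [hsum]
  exact two_mul_norm_add_two_mul_norm_sub_three_le hμ0 hμ1 (hchar θ) (hchar ψ)

theorem swap_key_inequality (p : ℕ) [Fact p.Prime] {F : Type} [Field F] [Fintype F]
    [Algebra (ZMod p) F] (μ : F → ℝ) (hμ0 : ∀ t, 0 ≤ μ t) (hμ1 : ∑ t, μ t = 1)
    (θ ψ : F) :
    ‖muHat p μ θ * muHat p μ ψ‖ ≤
      (1 - (1 / 8 : ℝ) + (1 / 8 : ℝ) * ‖muHat p μ (θ + ψ)‖ ^ 2) ^ 2 :=
  swap_key_inequality_general p μ hμ0 hμ1 θ ψ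
end
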